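/- Suppose n is even and p, q ≥ 1 are integers with p + q ≡ 0 (mod 2(n+1)). Then G_{n,p} ≅ G_{n,q} as abelian groups. -/
import Mathlib


/-- The Coxeter transformation of the linearly oriented Dynkin quiver `A_n`, acting on
`ℤ^n = K_0(D^b(mod K A_n))` in the basis of classes of simple modules:
`φ(e_i) = e_{i+1}` for `1 ≤ i ≤ n-1` and `φ(e_n) = -(e_1 + ⋯ + e_n)`.
(Here the basis vector `e_i` is `Pi.single ⟨i-1, _⟩ 1`.) -/
noncomputable def phiA (n : ℕ) : Module.End ℤ (Fin n → ℤ) :=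
  (Pi.basisFun ℤ (Fin n)).constr ℤ (fun i =>
    if h : (i : ℕ) + 1 < n then Pi.single (⟨(i : ℕ) + 1, h⟩ : Fin n) 1 else fun _ => -1)

lemma phiA_single (n : ℕ) (i : Fin n) :
    phiA n (Pi.single i 1) =
      if h : (i : ℕ) + 1 < n then Pi.single (⟨(i : ℕ) + 1, h⟩ : Fin n) 1 else fun _ => -1 := by
  have := (Pi.basisFun ℤ (Fin n)).constr_basis ℤ (fun i =>
    if h : (i : ℕ) + 1 < n then Pi.single (⟨(i : ℕ) + 1, h⟩ : Fin n) (1:ℤ) else fun _ => -1) i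
  simpa [phiA, Pi.basisFun_apply] using this

lemma phiA_ones (m : ℕ) : phiA (m+1) (fun _ => (1:ℤ)) = -Pi.single 0 1 := by
  have h1 : (fun _ => (1:ℤ)) = ∑ i : Fin (m+1), Pi.single i (1:ℤ) := by
    rw [Finset.univ_sum_single]
  rw [h1, map_sum]
  have h2 : ∀ i : Fin (m+1), phiA (m+1) (Pi.single i 1) =
      if h : (i : ℕ) + 1 < m+1 then Pi.single (⟨(i : ℕ) + 1, h⟩ : Fin (m+1)) (1:ℤ) else fun _ => -1 :=
    phiA_single (m+1)
  rw [Finset.sum_congr rfl (fun i _ => h2 i)]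
  rw [Fin.sum_univ_castSucc]
  have hlast : ((Fin.last m : Fin (m+1)) : ℕ) + 1 < m + 1 ↔ False := by simp [Fin.last]
  rw [dif_neg (by simp [Fin.last])]
  have h3 : ∀ i : Fin m,
      (if h : ((i.castSucc : Fin (m+1)) : ℕ) + 1 < m+1 then Pi.single (⟨((i.castSucc : Fin (m+1)) : ℕ) + 1, h⟩ : Fin (m+1)) (1:ℤ) else fun _ => -1)
      = Pi.single i.succ 1 := by
    intro i
    rw [dif_pos (by simpa using i.isLt)]
    congr 1
  rw [Finset.sum_congr rfl (fun i _ => h3 i)]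
  have h4 : (∑ i : Fin m, Pi.single i.succ (1:ℤ)) = (fun _ => (1:ℤ)) - Pi.single 0 1 := by
    have := Fin.sum_univ_succ (fun j : Fin (m+1) => Pi.single j (1:ℤ))
    rw [Finset.univ_sum_single] at this
    rw [eq_sub_iff_add_eq, this]
    exact add_comm _ _
  rw [h4]
  funext j
  simp only [Pi.sub_apply, Pi.add_apply, Pi.neg_apply, Pi.single_apply]
  ring

lemma phiA_neg_ones (m : ℕ) : phiA (m+1) (fun _ => (-1:ℤ)) = Pi.single 0 1 := by
  have : (fun _ => (-1:ℤ)) = (-(fun _ => (1:ℤ)) : Fin (m+1) → ℤ) := by funext j; simp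
  rw [this, map_neg, phiA_ones, neg_neg]

lemma phiA_pow_single (m : ℕ) (k : ℕ) (hk : k ≤ m) :
    ((phiA (m+1))^k) (Pi.single 0 1) = Pi.single (⟨k, by omega⟩ : Fin (m+1)) 1 := by
  induction k with
  | zero => simp
  | succ k ih =>
    rw [pow_succ', Module.End.mul_apply, ih (by omega), phiA_single]
    rw [dif_pos (by simpa using by omega : ((⟨k, by omega⟩ : Fin (m+1)) : ℕ) + 1 < m+1)]

lemma phiA_pow_n1 (m : ℕ) : ((phiA (m+1))^(m+2)) (Pi.single (0 : Fin (m+1)) 1) = Pi.single 0 1 := by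
  have h1 : ((phiA (m+1))^(m+1)) (Pi.single (0 : Fin (m+1)) 1) = fun _ => (-1:ℤ) := by
    rw [pow_succ', Module.End.mul_apply, phiA_pow_single m m le_rfl, phiA_single]
    rw [dif_neg (by simp)]
  rw [pow_succ', Module.End.mul_apply, h1, phiA_neg_ones]

lemma phiA_pow_eq_one (m : ℕ) : (phiA (m+1))^(m+2) = 1 := by
  apply (Pi.basisFun ℤ (Fin (m+1))).ext
  intro i
  have hb : (Pi.basisFun ℤ (Fin (m+1))) i = Pi.single i 1 := by
    simp [Pi.basisFun_apply]
  rw [hb]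
  have hi : Pi.single i (1:ℤ) = ((phiA (m+1))^(i:ℕ)) (Pi.single 0 1) := by
    rw [phiA_pow_single m i (by omega)]
  rw [hi, Module.End.one_apply, ← Module.End.mul_apply, ← pow_add,
    show m + 2 + (i:ℕ) = (i:ℕ) + (m+2) from Nat.add_comm _ _,
    pow_add, Module.End.mul_apply, phiA_pow_n1]

theorem stmt9 (n p q : ℕ) (hn : Even n) (hn1 : 1 ≤ n) (hp : 1 ≤ p) (hq : 1 ≤ q)
    (hpq : p + q ≡ 0 [MOD 2 * (n + 1)]) :
    Nonempty
      (((Fin n → ℤ) ⧸ LinearMap.range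
          ((1 : Module.End ℤ (Fin n → ℤ)) + ((-1 : ℤ)) ^ (p + 1) • (phiA n) ^ p)) ≃+
        ((Fin n → ℤ) ⧸ LinearMap.range
          ((1 : Module.End ℤ (Fin n → ℤ)) + ((-1 : ℤ)) ^ (q + 1) • (phiA n) ^ q))) := by
  set φ := phiA n with hφ
  -- φ^(n+1) = 1
  have h1 : φ ^ (n+1) = 1 := by
    obtain ⟨m, rfl⟩ : ∃ m, n = m + 1 := ⟨n - 1, by omega⟩
    exact phiA_pow_eq_one m
  -- φ^(p+q) = 1
  obtain ⟨k, hk⟩ : 2 * (n+1) ∣ p + q := (Nat.modEq_zero_iff_dvd).mp hpq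
  have hpq1 : φ ^ (p + q) = 1 := by
    rw [hk, show 2 * (n+1) * k = (n+1) * (2*k) by ring, pow_mul, h1, one_pow]
  -- signs are equal
  have hev : Even (p + q) := ⟨(n+1)*k, by rw [hk]; ring⟩
  have hsign : ((-1 : ℤ)) ^ (p+1) = ((-1 : ℤ)) ^ (q+1) := by
    rcases Nat.even_or_odd p with hpe | hpo
    · have hqe : Even q := by
        rcases Nat.even_or_odd q with h | h
        · exact h
        · exact absurd (hpe.add_odd h) (by simpa using hev)
      rw [(hpe.add_one).neg_one_pow, (hqe.add_one).neg_one_pow]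
    · have hqo : Odd q := by
        rcases Nat.even_or_odd q with h | h
        · exact absurd (hpo.add_even h) (by simpa [add_comm] using hev)
        · exact h
      rw [(hpo.add_one).neg_one_pow, (hqo.add_one).neg_one_pow]
  set ε : ℤ := ((-1 : ℤ)) ^ (p+1) with hε
  rw [← hsign]
  have hε2 : ε * ε = 1 := by
    rcases Nat.even_or_odd (p+1) with h | h
    · rw [hε, h.neg_one_pow]; ring
    · rw [hε, h.neg_one_pow]; ring
  set A : Module.End ℤ (Fin n → ℤ) := 1 + ε • φ ^ p with hA
  set B : Module.End ℤ (Fin n → ℤ) := 1 + ε • φ ^ q with hB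
  -- key identity
  have key : ε • (φ ^ p * B) = A := by
    rw [hB, mul_add, mul_one, mul_smul_comm, ← pow_add, hpq1, smul_add, smul_smul, hε2,
      one_smul, hA, add_comm]
  -- the linear equivalence given by φ^p
  have hfg : φ ^ p * φ ^ q = 1 := by rw [← pow_add, hpq1]
  have hgf : φ ^ q * φ ^ p = 1 := by rw [← pow_add, add_comm, hpq1]
  let E : (Fin n → ℤ) ≃ₗ[ℤ] (Fin n → ℤ) :=
    LinearEquiv.ofLinear (φ ^ p) (φ ^ q)
      (by rw [← Module.End.mul_eq_comp, hfg]; rfl)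
      (by rw [← Module.End.mul_eq_comp, hgf]; rfl)
  have hmap : (LinearMap.range B).map (E : (Fin n → ℤ) →ₗ[ℤ] (Fin n → ℤ)) = LinearMap.range A := by
    have hE : (E : (Fin n → ℤ) →ₗ[ℤ] (Fin n → ℤ)) = φ ^ p := rfl
    rw [hE, ← LinearMap.range_comp, ← Module.End.mul_eq_comp, ← key]
    rcases Nat.even_or_odd (p+1) with h | h
    · rw [hε, h.neg_one_pow, one_smul]
    · rw [hε, h.neg_one_pow, neg_one_smul, LinearMap.range_neg]
  exact ⟨((Submodule.Quotient.equiv (LinearMap.range B) (LinearMap.range A) E hmap).symm).toAddEquiv⟩
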